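/- Let A be a real m×n matrix, a ∈ ℝ^m, c ∈ ℝ^n and b ∈ ℝ, and suppose the system A x ≤ a (componentwise) has at least one solution x ∈ ℝ^n. Then the implication (for all x ∈ ℝ^n, A x ≤ a implies cᵀx ≤ b) holds if and only if there exists λ ∈ ℝ^m with λ ≥ 0 componentwise such that Aᵀλ = c and λᵀa ≤ b. -/

import Mathlib

open Matrix

/-!
Homogenize: `A x ≤ a ⟹ cᵀx ≤ b` says that `(c, b)` is nonnegative on every `(x, t)` with
`t ≥ 0` and `A x + t a ≥ 0` (scale by `t⁻¹` when `t > 0`; when `t = 0`, `x` is a recession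
direction of the nonempty feasible set). Farkas' lemma then writes `(c, b)` as a nonnegative
combination of the rows `(A i, a i)` and of `(0, 1)`.

Farkas' lemma is Hahn–Banach separation from a finitely generated cone, which is closed by the
conic Carathéodory theorem: it is a finite union of images of orthants under injective linear maps.
-/

section Caratheodory

variable {𝕜 ι E : Type*} [Field 𝕜] [LinearOrder 𝕜] [IsStrictOrderedRing 𝕜] [AddCommGroup E]
  [Module 𝕜 E] (v : ι → E)

lemma exists_sum_smul_eq_zero_pos_of_not_linearIndepOn {s : Finset ι}
    (hs : ¬LinearIndepOn 𝕜 v s) :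
    ∃ μ : ι → 𝕜, ∑ i ∈ s, μ i • v i = 0 ∧ ∃ i ∈ s, 0 < μ i := by
  obtain ⟨μ, hμ, i, hi, hμi⟩ := not_linearIndepOn_finset_iff.mp hs
  rcases hμi.lt_or_gt with hneg | hpos
  · exact ⟨-μ, by simp [neg_smul, Finset.sum_neg_distrib, hμ], i, hi, neg_pos.mpr hneg⟩
  · exact ⟨μ, hμ, i, hi, hpos⟩

lemma exists_nonneg_sum_erase_eq_of_not_linearIndepOn [DecidableEq ι] {s : Finset ι}
    {l : ι → 𝕜} (hl : ∀ i ∈ s, 0 ≤ l i) (hs : ¬LinearIndepOn 𝕜 v s) :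
    ∃ j ∈ s, ∃ l' : ι → 𝕜, (∀ i ∈ s.erase j, 0 ≤ l' i) ∧
      ∑ i ∈ s.erase j, l' i • v i = ∑ i ∈ s, l i • v i := by
  obtain ⟨μ, hμ, i₁, hi₁, hμi₁⟩ := exists_sum_smul_eq_zero_pos_of_not_linearIndepOn v hs
  -- subtract the largest multiple `r • μ` of the relation that keeps all coefficients nonnegative
  obtain ⟨j, hj, hmin⟩ := (s.filter (0 < μ ·)).exists_min_image (fun i => l i / μ i)
    ⟨i₁, Finset.mem_filter.mpr ⟨hi₁, hμi₁⟩⟩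
  obtain ⟨hjs, hμj⟩ := Finset.mem_filter.mp hj
  set r := l j / μ j
  have hr : 0 ≤ r := div_nonneg (hl j hjs) hμj.le
  have hl' : ∀ i ∈ s, 0 ≤ l i - r * μ i := by
    intro i hi
    rcases lt_or_ge 0 (μ i) with hμi | hμi
    · have := (le_div_iff₀ hμi).mp (hmin i (Finset.mem_filter.mpr ⟨hi, hμi⟩))
      linarith
    · nlinarith [hl i hi]
  have hsum : ∑ i ∈ s, (l i - r * μ i) • v i = ∑ i ∈ s, l i • v i := by
    simp only [sub_smul, Finset.sum_sub_distrib, mul_smul, ← Finset.smul_sum, hμ, smul_zero,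
      sub_zero]
  refine ⟨j, hjs, fun i => l i - r * μ i, fun i hi => hl' i (Finset.mem_of_mem_erase hi), ?_⟩
  rw [Finset.sum_erase _ (by simp [r, div_mul_cancel₀ _ hμj.ne']), hsum]

theorem exists_linearIndepOn_nonneg_sum_eq {s : Finset ι} {l : ι → 𝕜}
    (hl : ∀ i ∈ s, 0 ≤ l i) :
    ∃ t ⊆ s, LinearIndepOn 𝕜 v t ∧ ∃ l' : ι → 𝕜, (∀ i ∈ t, 0 ≤ l' i) ∧
      ∑ i ∈ t, l' i • v i = ∑ i ∈ s, l i • v i := by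
  classical
  induction s using Finset.strongInduction generalizing l with
  | _ s ih =>
    by_cases hs : LinearIndepOn 𝕜 v s
    · exact ⟨s, subset_rfl, hs, l, hl, rfl⟩
    obtain ⟨j, hj, l', hl', hsum⟩ := exists_nonneg_sum_erase_eq_of_not_linearIndepOn v hl hs
    obtain ⟨t, hts, ht, l'', hl'', hsum'⟩ := ih _ (Finset.erase_ssubset hj) hl'
    exact ⟨t, hts.trans (Finset.erase_subset j s), ht, l'', hl'', hsum'.trans hsum⟩

end Caratheodory

section Farkas

variable {E : Type*} [AddCommGroup E] [TopologicalSpace E] [IsTopologicalAddGroup E]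
  [Module ℝ E] [ContinuousSMul ℝ E] [T2Space E]

lemma isClosed_image_Ici_of_linearIndependent {κ : Type*} [Fintype κ] {w : κ → E}
    (hw : LinearIndependent ℝ w) : IsClosed (Fintype.linearCombination ℝ w '' Set.Ici 0) :=
  (LinearMap.isClosedEmbedding_of_injective <| LinearMap.ker_eq_bot.mpr <|
    linearIndependent_iff_injective_fintypeLinearCombination.mp hw).isClosedMap _ isClosed_Ici

theorem isClosed_image_Ici_fintypeLinearCombination {ι : Type*} [Fintype ι] (v : ι → E) :
    IsClosed (Fintype.linearCombination ℝ v '' Set.Ici 0) := by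
  classical
  have hunion : Fintype.linearCombination ℝ v '' Set.Ici 0 =
      ⋃ (t : Finset ι) (_ : LinearIndepOn ℝ v t),
        Fintype.linearCombination ℝ (fun i : t => v i) '' Set.Ici 0 := by
    ext x
    simp only [Set.mem_image, Set.mem_Ici, Set.mem_iUnion, Fintype.linearCombination_apply]
    constructor
    · rintro ⟨l, hl, rfl⟩
      obtain ⟨t, -, ht, l', hl', hsum⟩ :=
        exists_linearIndepOn_nonneg_sum_eq v (s := .univ) fun i _ => hl i
      exact ⟨t, ht, fun i => l' i, fun i => hl' i i.2,
        by rw [Finset.sum_coe_sort t (fun i => l' i • v i), hsum]⟩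
    · rintro ⟨t, -, g, hg, rfl⟩
      refine ⟨fun i => if h : i ∈ t then g ⟨i, h⟩ else 0, fun i => ?_, ?_⟩
      · dsimp only
        split_ifs
        exacts [hg _, le_rfl]
      · rw [← Finset.sum_subset (Finset.subset_univ t) (fun i _ hi => by simp [hi]),
          ← Finset.sum_coe_sort t]
        exact Finset.sum_congr rfl fun i _ => by simp
  rw [hunion]
  exact isClosed_iUnion_of_finite fun t => isClosed_iUnion_of_finite fun ht =>
    isClosed_image_Ici_of_linearIndependent ht

theorem exists_nonneg_sum_smul_eq_of_forall_strongDual_nonneg [LocallyConvexSpace ℝ E]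
    {ι : Type*} [Fintype ι] (v : ι → E) {x : E}
    (h : ∀ f : StrongDual ℝ E, (∀ i, 0 ≤ f (v i)) → 0 ≤ f x) :
    ∃ l : ι → ℝ, 0 ≤ l ∧ ∑ i, l i • v i = x := by
  classical
  let C : ProperCone ℝ E :=
    ⟨(PointedCone.positive ℝ (ι → ℝ)).map (Fintype.linearCombination ℝ v), by
      convert isClosed_image_Ici_fintypeLinearCombination v
      ext; simp⟩
  have hC : ∀ y, y ∈ C ↔ ∃ l : ι → ℝ, 0 ≤ l ∧ ∑ i, l i • v i = y := by
    simp [C, Fintype.linearCombination_apply]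
  by_contra hx
  obtain ⟨f, hfC, hfx⟩ := C.hyperplane_separation_point (x₀ := x) (mt (hC x).mp hx)
  refine (h f fun i => hfC _ ((hC _).mpr ⟨Pi.single i 1, ?_, ?_⟩)).not_gt hfx
  · exact Pi.single_nonneg.mpr zero_le_one
  · simp [Pi.single_apply]

end Farkas

theorem Matrix.exists_nonneg_transpose_mulVec_eq_of_forall_mulVec_nonneg {ι κ : Type*}
    [Fintype ι] [Fintype κ] (M : Matrix ι κ ℝ) {d : κ → ℝ} (h : ∀ y, 0 ≤ M *ᵥ y → 0 ≤ d ⬝ᵥ y) :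
    ∃ l, 0 ≤ l ∧ Mᵀ *ᵥ l = d := by
  classical
  obtain ⟨l, hl, hsum⟩ := exists_nonneg_sum_smul_eq_of_forall_strongDual_nonneg (fun i => M i)
    (x := d) fun f hf => by
      obtain ⟨y, hy⟩ := (dotProductEquiv ℝ κ).surjective (f : Module.Dual ℝ (κ → ℝ))
      have hf_eq (z : κ → ℝ) : f z = z ⬝ᵥ y := by
        rw [dotProduct_comm, ← dotProductEquiv_apply_apply, hy]
        rfl
      rw [hf_eq]
      exact h y fun i => (hf_eq (M i)).symm.trans_ge (hf i)
  exact ⟨l, hl, by rw [mulVec_transpose, vecMul_eq_sum, hsum]⟩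

section Homogenization

variable {R ι κ : Type*} [CommSemiring R]

def homogenization (A : Matrix ι κ R) (a : ι → R) : Matrix (ι ⊕ Unit) (κ ⊕ Unit) R :=
  fromBlocks A (replicateCol Unit a) 0 1

lemma homogenization_mulVec [Fintype κ] (A : Matrix ι κ R) (a : ι → R) (x : κ → R) (t : R) :
    homogenization A a *ᵥ Sum.elim x (fun _ => t) = Sum.elim (A *ᵥ x + t • a) (fun _ => t) := by
  ext (i | i) <;> simp [homogenization, mulVec, dotProduct, mul_comm]

lemma transpose_homogenization_mulVec [Fintype ι] (A : Matrix ι κ R) (a : ι → R) (l : ι → R)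
    (s : R) : (homogenization A a)ᵀ *ᵥ Sum.elim l (fun _ => s) =
      Sum.elim (Aᵀ *ᵥ l) (fun _ => l ⬝ᵥ a + s) := by
  ext (i | i) <;> simp [homogenization, mulVec, dotProduct, mul_comm]

end Homogenization

section AffineConsequence

variable {𝕜 ι κ : Type*} [Field 𝕜] [LinearOrder 𝕜] [IsStrictOrderedRing 𝕜] [Fintype κ]
  {A : Matrix ι κ 𝕜} {a : ι → 𝕜} {c : κ → 𝕜} {b : 𝕜}

lemma dotProduct_nonneg_of_mulVec_nonneg {x₀ : κ → 𝕜} (hx₀ : A *ᵥ x₀ ≤ a)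
    (H : ∀ x, A *ᵥ x ≤ a → c ⬝ᵥ x ≤ b) {y : κ → 𝕜} (hy : 0 ≤ A *ᵥ y) : 0 ≤ c ⬝ᵥ y := by
  by_contra! hneg
  -- `x₀ - s • y` is feasible, and `s` is chosen so that its objective value is `b + 1`
  set s := (b - c ⬝ᵥ x₀ + 1) / -(c ⬝ᵥ y)
  have hs : 0 ≤ s := div_nonneg (by linarith [H x₀ hx₀]) (by linarith)
  have hsy : s * -(c ⬝ᵥ y) = b - c ⬝ᵥ x₀ + 1 := div_mul_cancel₀ _ (neg_pos.2 hneg).ne'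
  have hfeas : A *ᵥ (x₀ - s • y) ≤ a := fun i => by
    simp only [mulVec_sub, mulVec_smul, Pi.sub_apply, Pi.smul_apply, smul_eq_mul]
    linarith [hx₀ i, mul_nonneg hs (hy i)]
  have := H _ hfeas
  rw [dotProduct_sub, dotProduct_smul, smul_eq_mul] at this
  linarith

lemma dotProduct_add_mul_nonneg_of_mulVec_add_smul_nonneg (hfeas : ∃ x₀, A *ᵥ x₀ ≤ a)
    (H : ∀ x, A *ᵥ x ≤ a → c ⬝ᵥ x ≤ b) {y : κ → 𝕜} {t : 𝕜} (ht : 0 ≤ t)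
    (hyt : 0 ≤ A *ᵥ y + t • a) : 0 ≤ c ⬝ᵥ y + t * b := by
  rcases ht.eq_or_lt with rfl | ht
  · obtain ⟨x₀, hx₀⟩ := hfeas
    simpa using dotProduct_nonneg_of_mulVec_nonneg hx₀ H (by simpa using hyt)
  · have hx : A *ᵥ (-t⁻¹ • y) ≤ a := fun i => by
      have := mul_nonneg (inv_nonneg.2 ht.le) (hyt i)
      simp only [mulVec_smul, Pi.smul_apply, smul_eq_mul, Pi.add_apply, mul_add,
        inv_mul_cancel_left₀ ht.ne'] at this ⊢
      linarith
    have := mul_le_mul_of_nonneg_left (H _ hx) ht.le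
    rw [dotProduct_smul, smul_eq_mul] at this
    field_simp at this
    linarith

end AffineConsequence

theorem motzkin_transposition {m n : ℕ}
    (A : Matrix (Fin m) (Fin n) ℝ) (a : Fin m → ℝ) (c : Fin n → ℝ) (b : ℝ)
    (hfeas : ∃ x : Fin n → ℝ, A.mulVec x ≤ a) :
    (∀ x : Fin n → ℝ, A.mulVec x ≤ a → c ⬝ᵥ x ≤ b) ↔
      ∃ lam : Fin m → ℝ, 0 ≤ lam ∧ Aᵀ.mulVec lam = c ∧ lam ⬝ᵥ a ≤ b := by
  have split_sum {α : Type} (y : α ⊕ Unit → ℝ) : ∃ x t, y = Sum.elim x fun _ => t :=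
    ⟨y ∘ Sum.inl, y (.inr ()), by ext (i | i) <;> rfl⟩
  constructor
  · intro H
    obtain ⟨l, hl, hl_eq⟩ :=
      (homogenization A a).exists_nonneg_transpose_mulVec_eq_of_forall_mulVec_nonneg
        (d := Sum.elim c fun _ => b) fun y hy => by
          obtain ⟨x, t, rfl⟩ := split_sum y
          rw [homogenization_mulVec, ← Sum.elim_zero_zero, Sum.elim_le_elim_iff] at hy
          simpa [sumElim_dotProduct_sumElim, mul_comm] using
            dotProduct_add_mul_nonneg_of_mulVec_add_smul_nonneg hfeas H (hy.2 ()) hy.1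
    obtain ⟨lam, s, rfl⟩ := split_sum l
    rw [transpose_homogenization_mulVec] at hl_eq
    refine ⟨lam, fun i => hl (.inl i), funext fun j => congrFun hl_eq (.inl j), ?_⟩
    have hs : 0 ≤ s := hl (.inr ())
    have hb : lam ⬝ᵥ a + s = b := congrFun hl_eq (.inr ())
    linarith
  · rintro ⟨lam, hlam, rfl, hb⟩ x hx
    calc Aᵀ *ᵥ lam ⬝ᵥ x = lam ⬝ᵥ A *ᵥ x := by rw [mulVec_transpose, dotProduct_mulVec]
      _ ≤ lam ⬝ᵥ a := dotProduct_le_dotProduct_of_nonneg_left hx hlam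
      _ ≤ b := hb
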